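/- arXiv:2411.06219 — 2 statements merged into one kernel-verified Lean document; each statement's English description precedes it below -/
import Mathlib

section
/- Fixed-endpoint minimum-energy optimality (core of Theorem 1): Let τ₁ > 0, x₀, x₁ ∈ ℝⁿ, and suppose the weighted controllability Gramian G(τ₁) is invertible. Define the control u*(t) = R⁻¹ Bᵀ exp(Aᵀ(τ₁ − t)) G(τ₁)⁻¹ (x₁ − x̂(τ₁)) for t ∈ [0, τ₁]. Then for every continuous control u : [0, τ₁] → ℝᵐ whose response x_u(t) = exp(A t) x₀ + ∫₀ᵗ exp(A(t − s)) (B u(s) + d) ds satisfies x_u(τ₁) = x₁, one has ∫₀^{τ₁} u*(t)ᵀ R u*(t) dt ≤ ∫₀^{τ₁} u(t)ᵀ R u(t) dt. -/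
/-! With `K(t) = e^{A(τ₁-t)} B`, a control `u` steers `x₀` to `x₁` exactly when
`∫ K u = x₁ - x̂(τ₁)`, and `G(τ₁) = ∫ K R⁻¹ Kᵀ`. Hence `u* = R⁻¹ Kᵀ w` with
`w = G(τ₁)⁻¹ (x₁ - x̂(τ₁))` steers as well, and for every steering `u` the cross term
`∫ u*ᵀ R (u - u*) = wᵀ ∫ K (u - u*)` vanishes. The energy of `u` is therefore that of `u*`
plus the nonnegative energy of `u - u*`. -/

open MeasureTheory Matrix

attribute [local instance] Matrix.normedAddCommGroup Matrix.normedSpace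

/-- The weighted controllability Gramian `G(τ) = ∫₀^τ e^{A(τ-s)} B R⁻¹ Bᵀ e^{Aᵀ(τ-s)} ds`. -/
noncomputable def gramian {n m : ℕ} (A : Matrix (Fin n) (Fin n) ℝ) (B : Matrix (Fin n) (Fin m) ℝ)
    (R : Matrix (Fin m) (Fin m) ℝ) (τ : ℝ) : Matrix (Fin n) (Fin n) ℝ :=
  ∫ s in (0:ℝ)..τ,
    NormedSpace.exp ((τ - s) • A) * B * R⁻¹ * Bᵀ * NormedSpace.exp ((τ - s) • Aᵀ)

/-- The free response `x̂(τ) = e^{Aτ} x₀ + ∫₀^τ e^{A(τ-s)} d ds`. -/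
noncomputable def freeResp {n : ℕ} (A : Matrix (Fin n) (Fin n) ℝ) (x₀ d : Fin n → ℝ) (τ : ℝ) :
    Fin n → ℝ :=
  (NormedSpace.exp (τ • A)).mulVec x₀ +
    ∫ s in (0:ℝ)..τ, (NormedSpace.exp ((τ - s) • A)).mulVec d

theorem ContinuousOn.matrix_mulVec {X ι κ R : Type*} [TopologicalSpace X] [Fintype κ]
    [TopologicalSpace R] [NonUnitalNonAssocSemiring R] [ContinuousAdd R] [ContinuousMul R]
    {s : Set X} {M : X → Matrix ι κ R} {v : X → κ → R} (hM : ContinuousOn M s)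
    (hv : ContinuousOn v s) : ContinuousOn (fun x => M x *ᵥ v x) s :=
  (continuous_fst.matrix_mulVec continuous_snd).comp_continuousOn (hM.prodMk hv)

theorem ContinuousOn.dotProduct {X κ R : Type*} [TopologicalSpace X] [Fintype κ]
    [TopologicalSpace R] [Mul R] [AddCommMonoid R] [ContinuousAdd R] [ContinuousMul R]
    {s : Set X} {u v : X → κ → R} (hu : ContinuousOn u s) (hv : ContinuousOn v s) :
    ContinuousOn (fun x => u x ⬝ᵥ v x) s :=
  (continuous_fst.dotProduct continuous_snd).comp_continuousOn (hu.prodMk hv)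

section IntervalIntegral

variable {ι κ : Type*} [Fintype ι] [Fintype κ] {μ : Measure ℝ} {a b : ℝ}

theorem intervalIntegral_mulVec [IsLocallyFiniteMeasure μ] {M : ℝ → Matrix ι κ ℝ}
    (hM : ContinuousOn M (Set.uIcc a b)) (v : κ → ℝ) :
    ∫ t in a..b, M t *ᵥ v ∂μ = (∫ t in a..b, M t ∂μ) *ᵥ v :=
  (LinearMap.toContinuousLinearMap ((mulVecBilin ℝ ℝ).flip v)).intervalIntegral_comp_comm
    hM.intervalIntegrable

theorem intervalIntegral_dotProduct {f : ℝ → κ → ℝ} (hf : IntervalIntegrable f μ a b)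
    (w : κ → ℝ) : ∫ t in a..b, w ⬝ᵥ f t ∂μ = w ⬝ᵥ ∫ t in a..b, f t ∂μ :=
  (LinearMap.toContinuousLinearMap (dotProductBilin ℝ ℝ w)).intervalIntegral_comp_comm hf

end IntervalIntegral

theorem Matrix.IsSymm.dotProduct_mulVec_self_eq {ι α : Type*} [Fintype ι] [CommRing α]
    {R : Matrix ι ι α} (hR : R.IsSymm) (u v : ι → α) :
    u ⬝ᵥ R *ᵥ u = v ⬝ᵥ R *ᵥ v + (u - v) ⬝ᵥ R *ᵥ (u - v) + 2 * (v ⬝ᵥ R *ᵥ (u - v)) := by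
  have hsymm : u ⬝ᵥ R *ᵥ v = v ⬝ᵥ R *ᵥ u := by
    rw [dotProduct_mulVec, ← mulVec_transpose, hR.eq, dotProduct_comm]
  simp only [mulVec_sub, dotProduct_sub, sub_dotProduct]
  linear_combination hsymm

theorem Matrix.IsSymm.inv_mul_transpose_mulVec_dotProduct {ι κ α : Type*} [Fintype ι]
    [Fintype κ] [DecidableEq κ] [CommRing α] {R : Matrix κ κ α} (hR : R.IsSymm) (hRu : IsUnit R)
    (M : Matrix ι κ α) (w : ι → α) (z : κ → α) : (R⁻¹ * Mᵀ) *ᵥ w ⬝ᵥ R *ᵥ z = w ⬝ᵥ M *ᵥ z := by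
  rw [dotProduct_mulVec, ← vecMul_transpose, vecMul_vecMul, dotProduct_mulVec, transpose_mul,
    transpose_nonsing_inv, hR.eq, transpose_transpose, Matrix.mul_assoc,
    nonsing_inv_mul R ((isUnit_iff_isUnit_det R).mp hRu), Matrix.mul_one]

theorem integral_dotProduct_mulVec_le_of_cross_eq_zero {κ : Type*} [Fintype κ]
    {R : Matrix κ κ ℝ} (hR : R.PosSemidef) {a b : ℝ} (hab : a ≤ b) {u v : ℝ → κ → ℝ}
    (hu : ContinuousOn u (Set.Icc a b)) (hv : ContinuousOn v (Set.Icc a b))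
    (hcross : ∫ t in a..b, v t ⬝ᵥ R *ᵥ (u t - v t) = 0) :
    ∫ t in a..b, v t ⬝ᵥ R *ᵥ v t ≤ ∫ t in a..b, u t ⬝ᵥ R *ᵥ u t := by
  have hint : ∀ f g : ℝ → κ → ℝ, ContinuousOn f (Set.Icc a b) → ContinuousOn g (Set.Icc a b) →
      IntervalIntegrable (fun t => f t ⬝ᵥ R *ᵥ g t) volume a b := fun f g hf hg =>
    (hf.dotProduct (continuousOn_const.matrix_mulVec hg)).intervalIntegrable_of_Icc hab
  have hsub : ContinuousOn (fun t => u t - v t) (Set.Icc a b) := hu.sub hv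
  have hexpand : ∫ t in a..b, u t ⬝ᵥ R *ᵥ u t = (∫ t in a..b, v t ⬝ᵥ R *ᵥ v t) +
      (∫ t in a..b, (u t - v t) ⬝ᵥ R *ᵥ (u t - v t)) +
      2 * ∫ t in a..b, v t ⬝ᵥ R *ᵥ (u t - v t) := by
    rw [← intervalIntegral.integral_const_mul,
      ← intervalIntegral.integral_add (hint _ _ hv hv) (hint _ _ hsub hsub),
      ← intervalIntegral.integral_add ((hint _ _ hv hv).add (hint _ _ hsub hsub))
        ((hint _ _ hv hsub).const_mul 2)]
    have hRsymm : R.IsSymm := hR.isHermitian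
    exact intervalIntegral.integral_congr fun t _ => hRsymm.dotProduct_mulVec_self_eq (u t) (v t)
  have hnonneg : 0 ≤ ∫ t in a..b, (u t - v t) ⬝ᵥ R *ᵥ (u t - v t) :=
    intervalIntegral.integral_nonneg hab fun t _ => hR.dotProduct_mulVec_nonneg _
  rw [hexpand, hcross]
  linarith

theorem integral_dotProduct_mulVec_le_of_integral_mulVec_eq {ι κ : Type*} [Fintype ι]
    [Fintype κ] [DecidableEq κ] {R : Matrix κ κ ℝ} (hR : R.PosDef) {a b : ℝ} (hab : a ≤ b)
    {Φ : ℝ → Matrix ι κ ℝ} (hΦ : ContinuousOn Φ (Set.Icc a b)) (w : ι → ℝ) {u : ℝ → κ → ℝ}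
    (hu : ContinuousOn u (Set.Icc a b))
    (hreach : ∫ t in a..b, Φ t *ᵥ u t = ∫ t in a..b, Φ t *ᵥ ((R⁻¹ * (Φ t)ᵀ) *ᵥ w)) :
    ∫ t in a..b, (R⁻¹ * (Φ t)ᵀ) *ᵥ w ⬝ᵥ R *ᵥ ((R⁻¹ * (Φ t)ᵀ) *ᵥ w) ≤
      ∫ t in a..b, u t ⬝ᵥ R *ᵥ u t := by
  set ustar := fun t => (R⁻¹ * (Φ t)ᵀ) *ᵥ w
  have hustar : ContinuousOn ustar (Set.Icc a b) :=
    (by fun_prop : Continuous fun M : Matrix ι κ ℝ => (R⁻¹ * Mᵀ) *ᵥ w).comp_continuousOn hΦ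
  have hint : ∀ v : ℝ → κ → ℝ, ContinuousOn v (Set.Icc a b) →
      IntervalIntegrable (fun t => Φ t *ᵥ v t) volume a b := fun v hv =>
    (hΦ.matrix_mulVec hv).intervalIntegrable_of_Icc hab
  have hRsymm : R.IsSymm := hR.isHermitian
  refine integral_dotProduct_mulVec_le_of_cross_eq_zero hR.posSemidef hab hu hustar ?_
  calc ∫ t in a..b, ustar t ⬝ᵥ R *ᵥ (u t - ustar t)
      = ∫ t in a..b, w ⬝ᵥ (Φ t *ᵥ u t - Φ t *ᵥ ustar t) :=
        intervalIntegral.integral_congr fun t _ => by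
          rw [hRsymm.inv_mul_transpose_mulVec_dotProduct hR.isUnit, mulVec_sub]
    _ = w ⬝ᵥ ((∫ t in a..b, Φ t *ᵥ u t) - ∫ t in a..b, Φ t *ᵥ ustar t) := by
        rw [intervalIntegral_dotProduct ((hint u hu).sub (hint ustar hustar)),
          intervalIntegral.integral_sub (hint u hu) (hint ustar hustar)]
    _ = 0 := by rw [hreach, sub_self, dotProduct_zero]

theorem Matrix.exp_continuous {ι 𝔸 : Type*} [Fintype ι] [DecidableEq ι] [NormedRing 𝔸]
    [NormedAlgebra ℚ 𝔸] [CompleteSpace 𝔸] :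
    Continuous (NormedSpace.exp : Matrix ι ι 𝔸 → Matrix ι ι 𝔸) := by
  -- continuity only sees the topology, which the ℓ∞-operator norm also induces
  let : NormedRing (Matrix ι ι 𝔸) := Matrix.linftyOpNormedRing
  let : NormedAlgebra ℚ (Matrix ι ι 𝔸) := Matrix.linftyOpNormedAlgebra
  exact @NormedSpace.exp_continuous _ _ _ (inferInstanceAs (CompleteSpace (ι → ι → 𝔸)))

section LinearSystem

variable {n m : ℕ} (A : Matrix (Fin n) (Fin n) ℝ) (B : Matrix (Fin n) (Fin m) ℝ)

noncomputable def inputKernel (τ t : ℝ) : Matrix (Fin n) (Fin m) ℝ :=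
  NormedSpace.exp ((τ - t) • A) * B

theorem continuous_inputKernel (τ : ℝ) : Continuous (inputKernel A B τ) :=
  (Matrix.exp_continuous.comp (by fun_prop)).matrix_mul continuous_const

theorem transpose_inputKernel (τ t : ℝ) :
    (inputKernel A B τ t)ᵀ = Bᵀ * NormedSpace.exp ((τ - t) • Aᵀ) := by
  rw [inputKernel, transpose_mul, ← exp_transpose, transpose_smul]

theorem gramian_eq_integral_inputKernel (R : Matrix (Fin m) (Fin m) ℝ) (τ : ℝ) :
    gramian A B R τ = ∫ t in (0:ℝ)..τ, inputKernel A B τ t * R⁻¹ * (inputKernel A B τ t)ᵀ := by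
  simp only [gramian, transpose_inputKernel]
  simp only [inputKernel, Matrix.mul_assoc]

theorem gramian_mulVec (R : Matrix (Fin m) (Fin m) ℝ) (τ : ℝ) (w : Fin n → ℝ) :
    gramian A B R τ *ᵥ w =
      ∫ t in (0:ℝ)..τ, inputKernel A B τ t *ᵥ ((R⁻¹ * (inputKernel A B τ t)ᵀ) *ᵥ w) := by
  have hK := continuous_inputKernel A B τ
  rw [gramian_eq_integral_inputKernel,
    ← intervalIntegral_mulVec ((hK.matrix_mul continuous_const).matrix_mul
      hK.matrix_transpose).continuousOn]
  simp only [mulVec_mulVec, Matrix.mul_assoc]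

theorem response_eq_freeResp_add (x₀ d : Fin n → ℝ) {τ : ℝ} {u : ℝ → Fin m → ℝ}
    (hu : ContinuousOn u (Set.uIcc 0 τ)) :
    NormedSpace.exp (τ • A) *ᵥ x₀ +
        ∫ s in (0:ℝ)..τ, NormedSpace.exp ((τ - s) • A) *ᵥ (B *ᵥ u s + d) =
      freeResp A x₀ d τ + ∫ s in (0:ℝ)..τ, inputKernel A B τ s *ᵥ u s := by
  have hKu : IntervalIntegrable (fun s => inputKernel A B τ s *ᵥ u s) volume 0 τ :=
    ((continuous_inputKernel A B τ).continuousOn.matrix_mulVec hu).intervalIntegrable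
  have hd : IntervalIntegrable (fun s => NormedSpace.exp ((τ - s) • A) *ᵥ d) volume 0 τ :=
    ((Matrix.exp_continuous.comp (by fun_prop)).matrix_mulVec
      continuous_const).intervalIntegrable _ _
  have hsplit : ∫ s in (0:ℝ)..τ, NormedSpace.exp ((τ - s) • A) *ᵥ (B *ᵥ u s + d) =
      (∫ s in (0:ℝ)..τ, inputKernel A B τ s *ᵥ u s) +
        ∫ s in (0:ℝ)..τ, NormedSpace.exp ((τ - s) • A) *ᵥ d := by
    rw [← intervalIntegral.integral_add hKu hd]
    simp only [inputKernel, mulVec_add, mulVec_mulVec]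
  rw [hsplit, freeResp]
  abel

end LinearSystem

/-- Fixed-endpoint minimum-energy optimality: the Gramian-form control `u*` steers the system
and has energy no larger than that of any continuous control whose response reaches `x₁`
at time `τ₁`. -/
theorem gramian_control_minimum_energy {n m : ℕ}
    (A : Matrix (Fin n) (Fin n) ℝ) (B : Matrix (Fin n) (Fin m) ℝ)
    (R : Matrix (Fin m) (Fin m) ℝ) (hR : R.PosDef) (x₀ d : Fin n → ℝ)
    (τ₁ : ℝ) (hτ₁ : 0 < τ₁) (x₁ : Fin n → ℝ)
    (hG : IsUnit (gramian A B R τ₁))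
    (ustar : ℝ → Fin m → ℝ)
    (hustar : ∀ t, ustar t =
      (R⁻¹ * Bᵀ * NormedSpace.exp ((τ₁ - t) • Aᵀ)).mulVec
        ((gramian A B R τ₁)⁻¹.mulVec (x₁ - freeResp A x₀ d τ₁)))
    (u : ℝ → Fin m → ℝ) (hu : ContinuousOn u (Set.Icc 0 τ₁))
    (xu : ℝ → Fin n → ℝ)
    (hxu : ∀ t, xu t = (NormedSpace.exp (t • A)).mulVec x₀ +
      ∫ s in (0:ℝ)..t, (NormedSpace.exp ((t - s) • A)).mulVec (B.mulVec (u s) + d))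
    (hreach : xu τ₁ = x₁) :
    (∫ t in (0:ℝ)..τ₁, ustar t ⬝ᵥ R.mulVec (ustar t)) ≤
      ∫ t in (0:ℝ)..τ₁, u t ⬝ᵥ R.mulVec (u t) := by
  set w := (gramian A B R τ₁)⁻¹ *ᵥ (x₁ - freeResp A x₀ d τ₁)
  have hustar_eq : ustar = fun t => (R⁻¹ * (inputKernel A B τ₁ t)ᵀ) *ᵥ w := by
    funext t
    rw [hustar, transpose_inputKernel, Matrix.mul_assoc]
  have hu_steers : ∫ t in (0:ℝ)..τ₁, inputKernel A B τ₁ t *ᵥ u t = x₁ - freeResp A x₀ d τ₁ := by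
    rw [← hreach, hxu, response_eq_freeResp_add A B x₀ d (by rwa [Set.uIcc_of_le hτ₁.le])]
    abel
  have hustar_steers : ∫ t in (0:ℝ)..τ₁, inputKernel A B τ₁ t *ᵥ ustar t =
      x₁ - freeResp A x₀ d τ₁ := by
    rw [hustar_eq, ← gramian_mulVec, mulVec_mulVec,
      mul_nonsing_inv _ ((isUnit_iff_isUnit_det _).mp hG), one_mulVec]
  rw [hustar_eq] at hustar_steers ⊢
  exact integral_dotProduct_mulVec_le_of_integral_mulVec_eq hR hτ₁.le
    (continuous_inputKernel A B τ₁).continuousOn w hu (hu_steers.trans hustar_steers.symm)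
end

section
/- Minimum-energy cost value: Let τ₁ > 0, x₀, x₁ ∈ ℝⁿ, and suppose the weighted controllability Gramian G(τ₁) is invertible. For the control u(t) = R⁻¹ Bᵀ exp(Aᵀ(τ₁ − t)) G(τ₁)⁻¹ (x₁ − x̂(τ₁)), the control energy satisfies ∫₀^{τ₁} u(t)ᵀ R u(t) dt = (x₁ − x̂(τ₁))ᵀ G(τ₁)⁻¹ (x₁ − x̂(τ₁)). -/
open MeasureTheory Matrix

attribute [local instance] Matrix.normedAddCommGroup Matrix.normedSpace

/-!
Write `w = G(τ₁)⁻¹ (x₁ − x̂(τ₁))` and `Φ(t) = exp(A(τ₁ − t))`, so that `u(t) = R⁻¹ Bᵀ Φ(t)ᵀ w`.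
Since `R` is symmetric, `u(t)ᵀ R u(t) = wᵀ Φ(t) B R⁻¹ Bᵀ Φ(t)ᵀ w` is the quadratic form of `w`
on the integrand of the Gramian, so the energy is `wᵀ G(τ₁) w = wᵀ (x₁ − x̂(τ₁))`.
-/

namespace Matrix

variable {ι κ : Type*} [Fintype ι]

theorem mulVec_dotProduct_mulVec_mulVec [Fintype κ] {K : Type*} [CommSemiring K]
    (P : Matrix ι κ K) (S : Matrix ι ι K) (w : κ → K) :
    P *ᵥ w ⬝ᵥ S *ᵥ (P *ᵥ w) = w ⬝ᵥ (Pᵀ * S * P) *ᵥ w := by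
  rw [dotProduct_mulVec, ← vecMul_transpose, vecMul_vecMul, ← dotProduct_mulVec,
    mulVec_vecMul, transpose_transpose]

theorem IsSymm.transpose_inv_mul_mul_mul_inv_mul [DecidableEq ι] {K : Type*} [CommRing K]
    {R : Matrix ι ι K} (hR : R.IsSymm) (hdet : IsUnit R.det) (C : Matrix ι κ K) :
    (R⁻¹ * C)ᵀ * R * (R⁻¹ * C) = Cᵀ * R⁻¹ * C := by
  rw [transpose_mul, transpose_nonsing_inv, hR.eq, Matrix.mul_assoc, ← Matrix.mul_assoc R,
    mul_nonsing_inv R hdet, Matrix.one_mul]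

theorem IsSymm.mulVec_dotProduct_mulVec_inv_mul_transpose [Fintype κ] [DecidableEq κ]
    {K : Type*} [CommRing K] {R : Matrix κ κ K} (hR : R.IsSymm) (hdet : IsUnit R.det)
    (B : Matrix ι κ K) (X : Matrix ι ι K) (w : ι → K) :
    (R⁻¹ * Bᵀ * Xᵀ) *ᵥ w ⬝ᵥ R *ᵥ ((R⁻¹ * Bᵀ * Xᵀ) *ᵥ w) =
      w ⬝ᵥ (X * B * R⁻¹ * Bᵀ * Xᵀ) *ᵥ w := by
  rw [mulVec_dotProduct_mulVec_mulVec, Matrix.mul_assoc R⁻¹,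
    hR.transpose_inv_mul_mul_mul_inv_mul hdet]
  simp only [transpose_mul, transpose_transpose, Matrix.mul_assoc]

-- Any Banach-algebra norm will do: all norms on matrices induce the same topology.
@[fun_prop]
theorem continuous_exp [DecidableEq ι] : Continuous (NormedSpace.exp : Matrix ι ι ℝ → _) := by
  let := Matrix.linftyOpNormedRing (n := ι) (α := ℝ)
  let := Matrix.linftyOpNormedAlgebra (n := ι) (R := ℚ) (α := ℝ)
  exact @NormedSpace.exp_continuous _ _ _ (by exact (inferInstance : CompleteSpace (ι → ι → ℝ)))

theorem intervalIntegral_dotProduct_mulVec {M : ℝ → Matrix ι ι ℝ} {a b : ℝ}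
    (hM : Continuous M) (v w : ι → ℝ) :
    ∫ t in a..b, v ⬝ᵥ M t *ᵥ w = v ⬝ᵥ (∫ t in a..b, M t) *ᵥ w :=
  let L : Matrix ι ι ℝ →L[ℝ] ℝ := LinearMap.toContinuousLinearMap
    { toFun := fun X => v ⬝ᵥ X *ᵥ w
      map_add' := fun X Y => by simp only [add_mulVec, dotProduct_add]
      map_smul' := fun c X => by simp only [smul_mulVec, dotProduct_smul, RingHom.id_apply] }
  L.intervalIntegral_comp_comm (hM.intervalIntegrable (E := Matrix ι ι ℝ) a b)

end Matrix

open Matrix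

section Gramian

variable {ι κ : Type*} [Fintype ι] [Fintype κ] [DecidableEq ι] [DecidableEq κ]

noncomputable def gramianIntegrand (A : Matrix ι ι ℝ) (B : Matrix ι κ ℝ) (R : Matrix κ κ ℝ)
    (τ s : ℝ) : Matrix ι ι ℝ :=
  NormedSpace.exp ((τ - s) • A) * B * R⁻¹ * Bᵀ * NormedSpace.exp ((τ - s) • Aᵀ)

theorem continuous_gramianIntegrand (A : Matrix ι ι ℝ) (B : Matrix ι κ ℝ) (R : Matrix κ κ ℝ)
    (τ : ℝ) : Continuous (gramianIntegrand A B R τ) := by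
  unfold gramianIntegrand
  fun_prop

end Gramian

theorem gramian_control_energy_value_general {n m : ℕ}
    (A : Matrix (Fin n) (Fin n) ℝ) (B : Matrix (Fin n) (Fin m) ℝ)
    (R : Matrix (Fin m) (Fin m) ℝ) (hR : R.PosDef) (x₀ d : Fin n → ℝ)
    (τ₁ : ℝ) (x₁ : Fin n → ℝ)
    (hG : IsUnit (gramian A B R τ₁))
    (u : ℝ → Fin m → ℝ)
    (hu : ∀ t, u t =
      (R⁻¹ * Bᵀ * NormedSpace.exp ((τ₁ - t) • Aᵀ)).mulVec
        ((gramian A B R τ₁)⁻¹.mulVec (x₁ - freeResp A x₀ d τ₁))) :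
    (∫ t in (0:ℝ)..τ₁, u t ⬝ᵥ R.mulVec (u t)) =
      (x₁ - freeResp A x₀ d τ₁) ⬝ᵥ
        (gramian A B R τ₁)⁻¹.mulVec (x₁ - freeResp A x₀ d τ₁) := by
  set v := x₁ - freeResp A x₀ d τ₁
  set G := gramian A B R τ₁
  set w := G⁻¹ *ᵥ v
  have hR_symm : R.IsSymm := by simpa [IsSymm] using hR.isHermitian.eq
  have energy_density (t : ℝ) :
      u t ⬝ᵥ R *ᵥ u t = w ⬝ᵥ gramianIntegrand A B R τ₁ t *ᵥ w := by
    rw [hu t, gramianIntegrand, ← transpose_smul, exp_transpose]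
    exact hR_symm.mulVec_dotProduct_mulVec_inv_mul_transpose
      ((isUnit_iff_isUnit_det R).mp hR.isUnit) B _ w
  calc (∫ t in (0:ℝ)..τ₁, u t ⬝ᵥ R *ᵥ u t)
      = ∫ t in (0:ℝ)..τ₁, w ⬝ᵥ gramianIntegrand A B R τ₁ t *ᵥ w :=
        intervalIntegral.integral_congr fun t _ ↦ energy_density t
    _ = w ⬝ᵥ G *ᵥ w :=
        intervalIntegral_dotProduct_mulVec (continuous_gramianIntegrand A B R τ₁) w w
    _ = w ⬝ᵥ v := by
        rw [mulVec_mulVec, mul_nonsing_inv G ((isUnit_iff_isUnit_det G).mp hG), one_mulVec]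
    _ = v ⬝ᵥ w := dotProduct_comm w v

/-- Minimum-energy cost value: the Gramian-form steering control has energy
`(x₁ − x̂(τ₁))ᵀ G(τ₁)⁻¹ (x₁ − x̂(τ₁))`. -/
theorem gramian_control_energy_value {n m : ℕ}
    (A : Matrix (Fin n) (Fin n) ℝ) (B : Matrix (Fin n) (Fin m) ℝ)
    (R : Matrix (Fin m) (Fin m) ℝ) (hR : R.PosDef) (x₀ d : Fin n → ℝ)
    (τ₁ : ℝ) (hτ₁ : 0 < τ₁) (x₁ : Fin n → ℝ)
    (hG : IsUnit (gramian A B R τ₁))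
    (u : ℝ → Fin m → ℝ)
    (hu : ∀ t, u t =
      (R⁻¹ * Bᵀ * NormedSpace.exp ((τ₁ - t) • Aᵀ)).mulVec
        ((gramian A B R τ₁)⁻¹.mulVec (x₁ - freeResp A x₀ d τ₁))) :
    (∫ t in (0:ℝ)..τ₁, u t ⬝ᵥ R.mulVec (u t)) =
      (x₁ - freeResp A x₀ d τ₁) ⬝ᵥ
        (gramian A B R τ₁)⁻¹.mulVec (x₁ - freeResp A x₀ d τ₁) :=
  gramian_control_energy_value_general A B R hR x₀ d τ₁ x₁ hG u hu
end
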